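/- Let C ⊆ ℝⁿ be closed and let I ⊆ {1,…,n} be nonempty with π(C) unbounded. If the interior of the Clarke tangent cone at infinity T_C(∞_I) is nonempty, then the normal cone multifunction is closed at infinity: whenever x_k ∈ C with ‖π(x_k)‖ → ∞, z_k ∈ N_C(x_k), and z_k → z, one has z ∈ N_C(∞_I). -/

import Mathlib

open Filter Topology Metric Set Bornology
open scoped InnerProductSpace Pointwise

noncomputable section

/-- Euclidean `n`-space. -/
abbrev En (n : ℕ) : Type := EuclideanSpace ℝ (Fin n)

/-- The Clarke tangent cone at infinity of `C ⊆ E`, where "going to infinity" is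
measured by `‖p x‖ → ∞` for a projection map `p`:  `v` belongs to the cone iff for all
sequences `x k ∈ C` with `‖p (x k)‖ → ∞` and all positive sequences `t k → 0` there is a
sequence `w k → v` with `x k + t k • w k ∈ C` for all `k`. -/
def tangentConeAtInfty {E F : Type*} [NormedAddCommGroup E] [NormedSpace ℝ E] [Norm F]
    (p : E → F) (C : Set E) : Set E :=
  {v | ∀ (x : ℕ → E) (t : ℕ → ℝ), (∀ k, x k ∈ C) →
      Tendsto (fun k => ‖p (x k)‖) atTop atTop →
      (∀ k, 0 < t k) → Tendsto t atTop (𝓝 0) →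
      ∃ w : ℕ → E, Tendsto w atTop (𝓝 v) ∧ ∀ k, x k + t k • w k ∈ C}

/-- Projection of `ℝⁿ` onto the coordinates indexed by `I`. -/
def proj {n : ℕ} (I : Finset (Fin n)) (x : En n) : EuclideanSpace ℝ ↥I := WithLp.toLp 2 (fun i => x i)

/-- The normal cone at infinity: the polar of the Clarke tangent cone at infinity. -/
def normalConeAtInfty {n : ℕ} {F : Type*} [Norm F] (p : En n → F) (C : Set (En n)) :
    Set (En n) :=
  {w | ∀ v ∈ tangentConeAtInfty p C, ⟪v, w⟫_ℝ ≤ 0}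

/-- The Clarke tangent cone to `C` at a point `x`. -/
def clarkeTangentCone {E : Type*} [NormedAddCommGroup E] [NormedSpace ℝ E]
    (C : Set E) (x : E) : Set E :=
  {v | ∀ (xk : ℕ → E) (t : ℕ → ℝ), (∀ k, xk k ∈ C) →
      Tendsto xk atTop (𝓝 x) →
      (∀ k, 0 < t k) → Tendsto t atTop (𝓝 0) →
      ∃ w : ℕ → E, Tendsto w atTop (𝓝 v) ∧ ∀ k, xk k + t k • w k ∈ C}

/-- The Clarke normal cone to `C` at a point `x`. -/
def clarkeNormalCone {n : ℕ} (C : Set (En n)) (x : En n) : Set (En n) :=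
  {w | ∀ v ∈ clarkeTangentCone C x, ⟪v, w⟫_ℝ ≤ 0}

/-!
The Clarke tangent cone at infinity `T` is a convex cone, so when its interior is nonempty
it lies in the closure of that interior, and it suffices to show `⟪u, z⟫ ≤ 0` for `u` in the
interior of `T`. Some closed ball around such a `u` lies in `T`. By compactness, every
direction of the ball is approximately feasible, uniformly over far-out points `y ∈ C` and
small steps `t`; an iteration that halves the remaining step each time, and spends the
slack of the ball to correct the accumulated error, upgrades this to exact feasibility:
`y + t • u ∈ C` for all far-out `y ∈ C` and small `t > 0`. Hence `u` is Clarke tangent to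
`C` at `x k` for large `k`, so `⟪u, z k⟫ ≤ 0`, and `⟪u, z⟫ ≤ 0` in the limit.
-/

lemma LipschitzWith.norm_le_norm_add_mul_dist {E F : Type*} [PseudoMetricSpace E]
    [SeminormedAddCommGroup F] {p : E → F} {L : NNReal} (hp : LipschitzWith L p) (a b : E) :
    ‖p a‖ ≤ ‖p b‖ + L * dist a b :=
  calc ‖p a‖ ≤ ‖p b‖ + ‖p a - p b‖ := norm_le_norm_add_norm_sub' _ _
    _ ≤ ‖p b‖ + L * dist a b := by
      gcongr
      rw [← dist_eq_norm]
      exact hp.dist_le_mul a b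

lemma proj_sub {n : ℕ} (I : Finset (Fin n)) (a b : En n) :
    proj I (a - b) = proj I a - proj I b := by
  ext i
  simp [proj]

lemma norm_proj_le {n : ℕ} (I : Finset (Fin n)) (a : En n) : ‖proj I a‖ ≤ ‖a‖ := by
  rw [EuclideanSpace.norm_eq, EuclideanSpace.norm_eq]
  refine Real.sqrt_le_sqrt ?_
  have h : ∑ i : ↥I, ‖proj I a i‖ ^ 2 = ∑ i ∈ I, ‖a i‖ ^ 2 :=
    (Finset.sum_coe_sort I fun i => ‖a i‖ ^ 2)
  rw [h]
  exact Finset.sum_le_sum_of_subset_of_nonneg (Finset.subset_univ I) fun i _ _ => by positivity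

lemma lipschitzWith_proj {n : ℕ} (I : Finset (Fin n)) : LipschitzWith 1 (proj I) :=
  LipschitzWith.of_dist_le_mul fun a b => by
    simpa [dist_eq_norm, ← proj_sub] using norm_proj_le I (a - b)

section TangentConeAtInfty

variable {E F : Type*} [NormedAddCommGroup E] [NormedSpace ℝ E]

lemma smul_mem_tangentConeAtInfty [Norm F] {p : E → F} {C : Set E} {v : E}
    (hv : v ∈ tangentConeAtInfty p C) {c : ℝ} (hc : 0 < c) :
    c • v ∈ tangentConeAtInfty p C := by
  intro x t hxC hx ht ht0
  obtain ⟨w, hw, hwC⟩ := hv x (fun k => c * t k) hxC hx (fun k => mul_pos hc (ht k))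
    (by simpa using ht0.const_mul c)
  refine ⟨fun k => c • w k, hw.const_smul c, fun k => ?_⟩
  simpa only [smul_smul, mul_comm] using hwC k

lemma exists_uniform_approx_of_isCompact_subset [Norm F] {p : E → F} {C K : Set E}
    (hK : IsCompact K) (hKT : K ⊆ tangentConeAtInfty p C) {ε : ℝ} (hε : 0 < ε) :
    ∃ R δ : ℝ, 0 < δ ∧ ∀ y ∈ C, R ≤ ‖p y‖ → ∀ t : ℝ, 0 < t → t < δ →
      ∀ w ∈ K, ∃ w' ∈ closedBall w ε, y + t • w' ∈ C := by
  by_contra! h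
  choose y hyC hyR t ht htδ w hwK hbad using
    fun j : ℕ => h j (1 / (j + 1)) Nat.one_div_pos_of_nat
  obtain ⟨w₀, hw₀K, φ, hφ, hwφ⟩ := hK.tendsto_subseq hwK
  have hyφ : Tendsto (fun j => ‖p (y (φ j))‖) atTop atTop :=
    tendsto_atTop_mono (fun j => (Nat.cast_le.2 hφ.le_apply).trans (hyR (φ j)))
      tendsto_natCast_atTop_atTop
  have htφ : Tendsto (fun j => t (φ j)) atTop (𝓝 0) :=
    squeeze_zero (fun j => (ht _).le) (fun j => (htδ (φ j)).le)
      (tendsto_one_div_add_atTop_nhds_zero_nat.comp hφ.tendsto_atTop)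
  obtain ⟨w', hw', hw'C⟩ :=
    hKT hw₀K (fun j => y (φ j)) (fun j => t (φ j)) (fun j => hyC _) hyφ (fun j => ht _) htφ
  have hclose : Tendsto (fun j => dist (w' j) (w (φ j))) atTop (𝓝 0) := by
    simpa using hw'.dist hwφ
  obtain ⟨j, hj⟩ := (hclose.eventually_lt_const hε).exists
  exact hbad (φ j) (w' j) (mem_closedBall.2 hj.le) (hw'C j)

variable [SeminormedAddCommGroup F] {p : E → F} {L : NNReal} {C : Set E}

lemma add_mem_tangentConeAtInfty (hp : LipschitzWith L p) {v v' : E}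
    (hv : v ∈ tangentConeAtInfty p C) (hv' : v' ∈ tangentConeAtInfty p C) :
    v + v' ∈ tangentConeAtInfty p C := by
  intro x t hxC hx ht ht0
  obtain ⟨w, hw, hwC⟩ := hv x t hxC hx ht ht0
  have hstep : Tendsto (fun k => ‖t k • w k‖) atTop (𝓝 0) := by simpa using (ht0.smul hw).norm
  have hx' : Tendsto (fun k => ‖p (x k + t k • w k)‖) atTop atTop := by
    refine tendsto_atTop_mono' atTop ?_ (tendsto_atTop_add_const_right atTop (-(L : ℝ)) hx)
    filter_upwards [hstep.eventually_le_const one_pos] with k hk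
    have := hp.norm_le_norm_add_mul_dist (x k) (x k + t k • w k)
    rw [dist_self_add_right] at this
    nlinarith [L.coe_nonneg]
  obtain ⟨w', hw', hw'C⟩ := hv' _ t hwC hx' ht ht0
  refine ⟨fun k => w k + w' k, hw.add hw', fun k => ?_⟩
  simpa only [smul_add, add_assoc] using hw'C k

lemma convex_tangentConeAtInfty (hp : LipschitzWith L p) :
    Convex ℝ (tangentConeAtInfty p C) :=
  convex_iff_forall_pos.2 fun _ hv _ hv' _ _ ha hb _ =>
    add_mem_tangentConeAtInfty hp (smul_mem_tangentConeAtInfty hv ha)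
      (smul_mem_tangentConeAtInfty hv' hb)

end TangentConeAtInfty

section Hypertangency

variable {E : Type*} [NormedAddCommGroup E] [NormedSpace ℝ E] {C : Set E}

lemma exists_mem_near_add_half_smul {a g u : E} {r σ : ℝ} (hr : 0 < r)
    (ha : ‖a - g‖ ≤ σ / 2 * r)
    (happrox : ∀ w ∈ closedBall u σ, ∃ w' ∈ closedBall w (σ / 2), a + (r / 2) • w' ∈ C) :
    ∃ a' ∈ C, ‖a' - (g + (r / 2) • u)‖ ≤ σ / 2 * (r / 2) := by
  set w := u + (r / 2)⁻¹ • (g - a) with hw_def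
  have hw : w ∈ closedBall u σ := by
    rw [mem_closedBall, dist_eq_norm, hw_def, add_sub_cancel_left, norm_smul, norm_sub_rev,
      Real.norm_of_nonneg (by positivity)]
    calc (r / 2)⁻¹ * ‖a - g‖ ≤ (r / 2)⁻¹ * (σ / 2 * r) := by gcongr
      _ = σ := by field_simp
  obtain ⟨w', hw', hw'C⟩ := happrox w hw
  refine ⟨a + (r / 2) • w', hw'C, ?_⟩
  have hland : a + (r / 2) • w = g + (r / 2) • u := by
    rw [hw_def, smul_add, smul_inv_smul₀ (by positivity)]
    abel
  rw [← hland, add_sub_add_left_eq_sub, ← smul_sub, norm_smul,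
    Real.norm_of_nonneg (by positivity), ← dist_eq_norm, mul_comm]
  gcongr
  exact mem_closedBall.1 hw'

lemma add_smul_mem_of_forall_approx (hC : IsClosed C) {y u : E} {t σ : ℝ} (hy : y ∈ C)
    (ht : 0 < t) (hσ : 0 ≤ σ)
    (happrox : ∀ a ∈ C, dist a y ≤ t * (‖u‖ + σ) → ∀ τ, 0 < τ → τ ≤ t →
      ∀ w ∈ closedBall u σ, ∃ w' ∈ closedBall w (σ / 2), a + τ • w' ∈ C) :
    y + t • u ∈ C := by
  have hiter : ∀ m : ℕ, ∃ a ∈ C, ‖a - (y + (t - t / 2 ^ m) • u)‖ ≤ σ / 2 * (t / 2 ^ m) := by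
    intro m
    induction m with
    | zero =>
      refine ⟨y, hy, ?_⟩
      simp only [pow_zero, div_one, sub_self, zero_smul, add_zero, norm_zero]
      positivity
    | succ m ih =>
      obtain ⟨a, haC, ha⟩ := ih
      have hr : 0 < t / 2 ^ m := by positivity
      have hrt : t / 2 ^ m ≤ t := div_le_self ht.le (one_le_pow₀ one_le_two)
      have hay : dist a y ≤ t * (‖u‖ + σ) :=
        calc dist a y = ‖(a - (y + (t - t / 2 ^ m) • u)) + (t - t / 2 ^ m) • u‖ := by
              rw [dist_eq_norm]; congr 1; abel
          _ ≤ σ / 2 * (t / 2 ^ m) + (t - t / 2 ^ m) * ‖u‖ := by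
              refine norm_add_le_of_le ha ?_
              rw [norm_smul, Real.norm_of_nonneg (by linarith)]
          _ ≤ t * (‖u‖ + σ) := by
              nlinarith [mul_le_mul_of_nonneg_left hrt hσ, mul_nonneg hr.le (norm_nonneg u)]
      rw [pow_succ, ← div_div, show t - t / 2 ^ m / 2 = (t - t / 2 ^ m) + t / 2 ^ m / 2 by ring,
        add_smul, ← add_assoc]
      exact exists_mem_near_add_half_smul hr ha
        (happrox a haC hay _ (by positivity) (by linarith))
  refine hC.closure_subset (Metric.mem_closure_iff.2 fun ε hε => ?_)
  have hlim : Tendsto (fun m : ℕ => t / 2 ^ m * (σ / 2 + ‖u‖)) atTop (𝓝 0) := by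
    simpa using
      ((tendsto_pow_atTop_atTop_of_one_lt one_lt_two).const_div_atTop t).mul_const (σ / 2 + ‖u‖)
  obtain ⟨m, hm⟩ := (hlim.eventually_lt_const hε).exists
  obtain ⟨a, haC, ha⟩ := hiter m
  refine ⟨a, haC, lt_of_le_of_lt ?_ hm⟩
  calc dist (y + t • u) a = ‖(a - (y + (t - t / 2 ^ m) • u)) - (t / 2 ^ m) • u‖ := by
        rw [dist_comm, dist_eq_norm, sub_smul]; congr 1; abel
    _ ≤ σ / 2 * (t / 2 ^ m) + t / 2 ^ m * ‖u‖ := by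
        refine norm_sub_le_of_le ha ?_
        rw [norm_smul, Real.norm_of_nonneg (by positivity)]
    _ = t / 2 ^ m * (σ / 2 + ‖u‖) := by ring

lemma mem_clarkeTangentCone_of_eventually_add_smul_mem {x u : E} {δ : ℝ} (hδ : 0 < δ)
    (h : ∀ᶠ y in 𝓝 x, y ∈ C → ∀ t, 0 < t → t < δ → y + t • u ∈ C) :
    u ∈ clarkeTangentCone C x := by
  classical
  intro xk t hxkC hxk ht ht0
  have hgood : ∀ᶠ k in atTop, xk k + t k • u ∈ C := by
    filter_upwards [hxk.eventually h, ht0.eventually_lt_const hδ] with k hk hkδ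
    exact hk (hxkC k) _ (ht k) hkδ
  refine ⟨fun k => if xk k + t k • u ∈ C then u else 0, tendsto_const_nhds.congr' ?_, fun k => ?_⟩
  · filter_upwards [hgood] with k hk
    simp [hk]
  · dsimp only
    split_ifs with hk
    · exact hk
    · simpa using hxkC k

variable {F : Type*} [SeminormedAddCommGroup F] {p : E → F} {L : NNReal}

lemma exists_forall_add_smul_mem_of_closedBall_subset [ProperSpace E] (hC : IsClosed C)
    (hp : LipschitzWith L p) {u : E} {σ : ℝ} (hσ : 0 < σ)
    (hball : closedBall u σ ⊆ tangentConeAtInfty p C) :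
    ∃ R δ : ℝ, 0 < δ ∧ ∀ y ∈ C, R ≤ ‖p y‖ → ∀ t : ℝ, 0 < t → t < δ → y + t • u ∈ C := by
  obtain ⟨R, δ, hδ, happrox⟩ :=
    exists_uniform_approx_of_isCompact_subset (isCompact_closedBall u σ) hball (half_pos hσ)
  refine ⟨R + L, min δ (‖u‖ + σ)⁻¹, lt_min hδ (by positivity), fun y hy hyR t ht htδ => ?_⟩
  have hreach : t * (‖u‖ + σ) ≤ 1 :=
    calc t * (‖u‖ + σ) ≤ (‖u‖ + σ)⁻¹ * (‖u‖ + σ) := by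
          gcongr
          exact (htδ.trans_le (min_le_right _ _)).le
      _ = 1 := inv_mul_cancel₀ (by positivity)
  refine add_smul_mem_of_forall_approx hC hy ht hσ.le fun a ha hay τ hτ hτt =>
    happrox a ha ?_ τ hτ (hτt.trans_lt (htδ.trans_le (min_le_left _ _)))
  have := hp.norm_le_norm_add_mul_dist y a
  rw [dist_comm] at this
  nlinarith [L.coe_nonneg]

lemma eventually_mem_clarkeTangentCone [ProperSpace E] (hC : IsClosed C)
    (hp : LipschitzWith L p) {u : E} (hu : u ∈ interior (tangentConeAtInfty p C))
    {x : ℕ → E} (hx : Tendsto (fun k => ‖p (x k)‖) atTop atTop) :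
    ∀ᶠ k in atTop, u ∈ clarkeTangentCone C (x k) := by
  obtain ⟨σ, hσ, hball⟩ := nhds_basis_closedBall.mem_iff.1 (mem_interior_iff_mem_nhds.1 hu)
  obtain ⟨R, δ, hδ, hhyper⟩ := exists_forall_add_smul_mem_of_closedBall_subset hC hp hσ hball
  filter_upwards [hx.eventually_gt_atTop R] with k hk
  refine mem_clarkeTangentCone_of_eventually_add_smul_mem hδ ?_
  filter_upwards [(isOpen_lt continuous_const hp.continuous.norm).mem_nhds hk] with y hy hyC
  exact hhyper y hyC hy.le

end Hypertangency

theorem stmt3_general (n : ℕ) (C : Set (En n)) (I : Finset (Fin n))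
    (hC : IsClosed C)
    (hint : (interior (tangentConeAtInfty (proj I) C)).Nonempty)
    (x z : ℕ → En n) (zlim : En n)
    (hxinf : Tendsto (fun k => ‖proj I (x k)‖) atTop atTop)
    (hz : ∀ k, z k ∈ clarkeNormalCone C (x k))
    (hzlim : Tendsto z atTop (𝓝 zlim)) :
    zlim ∈ normalConeAtInfty (proj I) C := by
  set T := tangentConeAtInfty (proj I) C
  have hT : T ⊆ closure (interior T) := by
    have hconv : Convex ℝ T := convex_tangentConeAtInfty (lipschitzWith_proj I)
    rw [hconv.closure_interior_eq_closure_of_nonempty_interior hint]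
    exact subset_closure
  have hinterior : interior T ⊆ {u | ⟪u, zlim⟫_ℝ ≤ 0} := fun u hu =>
    le_of_tendsto (tendsto_const_nhds.inner hzlim)
      ((eventually_mem_clarkeTangentCone hC (lipschitzWith_proj I) hu hxinf).mono
        fun k hk => hz k u hk)
  exact fun v hv => closure_minimal hinterior
    (isClosed_le (continuous_id.inner continuous_const) continuous_const) (hT hv)

/-- Corollary 3.7: if the Clarke tangent cone at infinity of a closed set has nonempty
interior, then the normal cone multifunction is closed at infinity. -/
theorem stmt3 (n : ℕ) (C : Set (En n)) (I : Finset (Fin n)) (hI : I.Nonempty)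
    (hC : IsClosed C) (hunb : ¬ IsBounded (proj I '' C))
    (hint : (interior (tangentConeAtInfty (proj I) C)).Nonempty)
    (x z : ℕ → En n) (zlim : En n)
    (hxC : ∀ k, x k ∈ C)
    (hxinf : Tendsto (fun k => ‖proj I (x k)‖) atTop atTop)
    (hz : ∀ k, z k ∈ clarkeNormalCone C (x k))
    (hzlim : Tendsto z atTop (𝓝 zlim)) :
    zlim ∈ normalConeAtInfty (proj I) C :=
  stmt3_general n C I hC hint x z zlim hxinf hz hzlim
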